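/- arXiv:1803.04441 — 3 statements merged into one kernel-verified Lean document; each statement's English description precedes it below -/
import Mathlib

section
/- For every a ∈ 𝒥(R) and every b ∈ R[[t]] whose coefficients in degrees 0 and 1 vanish, the series t + εb belongs to 𝒥(R[ε]) and, in R[ε][[t]], a ∘ (t + εb) = a + ε·(a′·b) = a ⋆ (t + εb), where a′ denotes the formal derivative of a with respect to t. In particular the 'differentials at the unit' of the left multiplications by a for ∘ and for ⋆ coincide. -/
open PowerSeries

/-- The set `𝒥(R)` of formal power series `t + ∑_{i≥1} α_i t^{i+1}`. -/
def Jset (R : Type*) [Ring R] : Set (PowerSeries R) :=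
  {f | coeff (R := R) 0 f = 0 ∧ coeff (R := R) 1 f = 1}

/-- The substitution product `f ∘ g = ∑_{m ≥ 0} α_m g^{m+1}`, defined coefficientwise. -/
noncomputable def Jcomp {R : Type*} [Ring R] (f g : PowerSeries R) : PowerSeries R :=
  PowerSeries.mk fun k => ∑ m ∈ Finset.range k, coeff (R := R) (m + 1) f * coeff (R := R) k (g ^ (m + 1))

/-- The formal derivative `d/dt` on `R[[t]]` (coefficientwise). -/
noncomputable def Dser {R : Type*} [Ring R] (f : PowerSeries R) : PowerSeries R :=
  PowerSeries.mk fun n => (n + 1 : ℕ) • coeff (R := R) (n + 1) f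

/-- The product `f ⋆ g := t + (f − t) + (g − t) + (f − t)′·(g − t)`. -/
noncomputable def Jstar {R : Type*} [Ring R] (f g : PowerSeries R) : PowerSeries R :=
  X + (f - X) + (g - X) + Dser (f - X) * (g - X)

/-!
Both products are first-order Taylor expansions. Put `p = εb`, so `p² = 0`. Then
`(t + p)^{m+1} = t^{m+1} + (m+1)·t^m·p`, and substituting `t + p` into `a` gives `a + a′·p`.
On the `⋆` side, `(a − t)′ = a′ − 1`, so `a ⋆ (t + p) = a + p + (a′ − 1)·p = a + a′·p`.
-/

open DualNumber

section

variable {S : Type*} [Ring S]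

theorem Commute.add_pow_succ_of_mul_self_eq_zero {x p : S} (h : Commute x p) (hp : p * p = 0)
    (n : ℕ) : (x + p) ^ (n + 1) = x ^ (n + 1) + (n + 1) • (x ^ n * p) := by
  induction n with
  | zero => simp
  | succ n ih =>
    have hpx : x ^ n * p * x = x ^ (n + 1) * p := by
      rw [mul_assoc, ← h.eq, ← mul_assoc, ← pow_succ]
    have hpp : x ^ n * p * p = 0 := by rw [mul_assoc, hp, mul_zero]
    rw [pow_succ _ (n + 1), ih, add_mul, mul_add, mul_add, smul_mul_assoc, smul_mul_assoc, hpx,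
      hpp, smul_zero, add_zero, ← pow_succ, succ_nsmul (x ^ (n + 1) * p) (n + 1)]
    abel

theorem Dser_sub (f g : PowerSeries S) : Dser (f - g) = Dser f - Dser g := by
  ext n
  simp [Dser, smul_sub]

theorem Dser_X : Dser (X : PowerSeries S) = 1 := by
  ext n
  rcases n with _ | n <;> simp [Dser, coeff_X, coeff_one]

theorem Jstar_X_add (f p : PowerSeries S) : Jstar f (X + p) = f + Dser f * p := by
  rw [Jstar, Dser_sub, Dser_X]
  noncomm_ring

theorem Jcomp_X {f : PowerSeries S} (hf : coeff 0 f = 0) : Jcomp f X = f := by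
  ext k
  rcases k with _ | k
  · simp [Jcomp, hf]
  · simp [Jcomp, coeff_X_pow]

theorem coeff_Dser_mul {p : PowerSeries S} (hp : coeff 0 p = 0) (f : PowerSeries S) (k : ℕ) :
    coeff k (Dser f * p) =
      ∑ m ∈ Finset.range k, coeff (m + 1) f * ((m + 1) • coeff k (X ^ m * p)) := by
  rw [coeff_mul, Finset.Nat.sum_antidiagonal_eq_sum_range_succ_mk, Finset.sum_range_succ,
    Nat.sub_self, hp, mul_zero, add_zero]
  refine Finset.sum_congr rfl fun m hm => ?_
  rw [Dser, coeff_mk, coeff_X_pow_mul', if_pos (Finset.mem_range.mp hm).le, smul_mul_assoc,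
    mul_smul_comm]

theorem Jcomp_X_add {f p : PowerSeries S} (hf : coeff 0 f = 0) (hp0 : coeff 0 p = 0)
    (hpp : p * p = 0) : Jcomp f (X + p) = f + Dser f * p := by
  ext k
  have hfX := congrArg (coeff k) (Jcomp_X hf)
  have hpow := (commute_X p).symm.add_pow_succ_of_mul_self_eq_zero hpp
  rw [map_add, coeff_Dser_mul hp0, ← hfX]
  simp only [Jcomp, coeff_mk, hpow, map_add, map_nsmul, mul_add, Finset.sum_add_distrib]

end

theorem DualNumber.commute_C_eps {S : Type*} [Ring S] (f : PowerSeries (DualNumber S)) :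
    Commute (C ε) f := by
  refine PowerSeries.ext fun n => ?_
  rw [coeff_C_mul, coeff_mul_C, (DualNumber.commute_eps_left _).eq]

/-- For `a ∈ 𝒥(R)` and `b ∈ R[[t]]` with vanishing coefficients in degrees `0` and `1`,
the series `t + εb` lies in `𝒥(R[ε])` and, in `R[ε][[t]]`,
`a ∘ (t + εb) = a + ε(a′·b) = a ⋆ (t + εb)`; in particular the differentials at the unit
of left multiplication by `a` for `∘` and `⋆` coincide. -/
theorem statement3 (R : Type*) [Ring R] (a : PowerSeries R) (ha : a ∈ Jset R)
    (b : PowerSeries R) (hb0 : coeff (R := R) 0 b = 0) (hb1 : coeff (R := R) 1 b = 0) :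
    (X + PowerSeries.C (R := DualNumber R) DualNumber.eps *
        PowerSeries.map (TrivSqZeroExt.inlHom R R) b ∈ Jset (DualNumber R)) ∧
    Jcomp (PowerSeries.map (TrivSqZeroExt.inlHom R R) a)
        (X + PowerSeries.C (R := DualNumber R) DualNumber.eps *
          PowerSeries.map (TrivSqZeroExt.inlHom R R) b) =
      PowerSeries.map (TrivSqZeroExt.inlHom R R) a +
        PowerSeries.C (R := DualNumber R) DualNumber.eps *
          (Dser (PowerSeries.map (TrivSqZeroExt.inlHom R R) a) *
            PowerSeries.map (TrivSqZeroExt.inlHom R R) b) ∧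
    Jstar (PowerSeries.map (TrivSqZeroExt.inlHom R R) a)
        (X + PowerSeries.C (R := DualNumber R) DualNumber.eps *
          PowerSeries.map (TrivSqZeroExt.inlHom R R) b) =
      PowerSeries.map (TrivSqZeroExt.inlHom R R) a +
        PowerSeries.C (R := DualNumber R) DualNumber.eps *
          (Dser (PowerSeries.map (TrivSqZeroExt.inlHom R R) a) *
            PowerSeries.map (TrivSqZeroExt.inlHom R R) b) := by
  set A := PowerSeries.map (TrivSqZeroExt.inlHom R R) a
  set B := PowerSeries.map (TrivSqZeroExt.inlHom R R) b
  have hA0 : coeff 0 A = 0 := by simp [A, ha.1]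
  have hp0 : coeff 0 (C ε * B) = 0 := by simp [B, hb0]
  have hp1 : coeff 1 (C ε * B) = 0 := by simp [B, hb1]
  have hpp : C ε * B * (C ε * B) = 0 := by
    rw [mul_assoc, ← mul_assoc B, ← (commute_C_eps B).eq, mul_assoc, ← mul_assoc, ← map_mul,
      eps_mul_eps, map_zero, zero_mul]
  have hDp : Dser A * (C ε * B) = C ε * (Dser A * B) := by
    rw [← mul_assoc, ← (commute_C_eps _).eq, mul_assoc]
  refine ⟨⟨?_, ?_⟩, ?_, ?_⟩
  · rw [map_add, hp0, coeff_zero_X, add_zero]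
  · rw [map_add, hp1, coeff_one_X, add_zero]
  · rw [Jcomp_X_add hA0 hp0 hpp, hDp]
  · rw [Jstar_X_add, hDp]
end

section
/- Let n, i ≥ 1 and α, β ∈ R. Let h ∈ 𝒥(R) satisfy h ≡ t + α t^{n+1} (mod 𝒥_{n+1}(R)) and set a := t + β t^{i+1}. Then the loop commutator satisfies [a,h] ≡ t + ((i+1)βα − (n+1)αβ)·t^{n+i+1} (mod 𝒥_{n+i+1}(R)). -/
open PowerSeries

/-- `f ≡ g (mod 𝒥_n(R))`: the coefficients of `t^{i+1}` coincide for `1 ≤ i ≤ n − 1`. -/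
def JModEq {R : Type*} [Ring R] (n : ℕ) (f g : PowerSeries R) : Prop :=
  ∀ i, 1 ≤ i → i < n → coeff (R := R) (i + 1) f = coeff (R := R) (i + 1) g

/-!
Write `h = X + u` and `a = X + v`, where `u = α X^{n+1} + O(X^{n+2})` and `v = β X^{i+1}`.
Since `X` is central, `(X + v)^{m+1} ≡ X^{m+1} + (m+1) X^m v` modulo `X^{m+2i+1}`, so up to
degree `n+i+1` the series `h ∘ a` agrees with `X + u + v` except for the extra term
`(n+1) α β` in degree `n+i+1`; symmetrically `a ∘ h` picks up `(i+1) β α` there.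
Conversely, if `F ∘ w = G` and `w ≡ X` below degree `k`, then `G_k = w_k + F_k`.
By induction on `k` the commutator `w` is therefore `X` below degree `n+i+1`, and its
coefficient in degree `n+i+1` is the difference of the two extra terms.
-/

namespace PowerSeries

variable {R : Type*} [Ring R]

lemma le_order_mul_of_le {φ ψ : PowerSeries R} {a b : ℕ} (hφ : (a : ℕ∞) ≤ φ.order)
    (hψ : (b : ℕ∞) ≤ ψ.order) : ((a + b : ℕ) : ℕ∞) ≤ (φ * ψ).order := by
  push_cast
  exact (add_le_add hφ hψ).trans (le_order_mul φ ψ)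

lemma le_order_pow_of_le {φ : PowerSeries R} {a : ℕ} (hφ : (a : ℕ∞) ≤ φ.order)
    (n : ℕ) :
    ((n * a : ℕ) : ℕ∞) ≤ (φ ^ n).order := by
  induction n with
  | zero => simp
  | succ n ih => simpa [pow_succ, Nat.succ_mul] using le_order_mul_of_le ih hφ

lemma le_order_X_pow (n : ℕ) : (n : ℕ∞) ≤ ((X : PowerSeries R) ^ n).order :=
  nat_le_order _ _ fun i hi => by rw [coeff_X_pow, if_neg hi.ne]

lemma le_order_X_add_pow_sub {u : PowerSeries R} {r : ℕ}
    (hu : ((r + 1 : ℕ) : ℕ∞) ≤ u.order) (m : ℕ) :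
    ((m + 2 * r + 1 : ℕ) : ℕ∞) ≤
      ((X + u) ^ (m + 1) - X ^ (m + 1) - ((m + 1 : ℕ) : PowerSeries R) * (X ^ m * u)).order := by
  induction m with
  | zero => simp
  | succ m ih =>
    have key :
        (X + u) ^ (m + 2) - X ^ (m + 2) - ((m + 2 : ℕ) : PowerSeries R) * (X ^ (m + 1) * u)
        = ((m + 1 : ℕ) : PowerSeries R) * (X ^ m * u ^ 2)
          + ((X + u) ^ (m + 1) - X ^ (m + 1) - ((m + 1 : ℕ) : PowerSeries R) * (X ^ m * u))
            * (X + u) := by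
      rw [pow_succ (X + u), pow_succ X (m + 1), pow_succ X m]
      push_cast
      noncomm_ring
      simp only [(commute_X u).eq]
      abel
    have hX : ((1 : ℕ) : ℕ∞) ≤ (X + u : PowerSeries R).order :=
      (le_min (by simpa using le_order_X_pow (R := R) 1) (le_trans (by simp) hu)).trans
        (min_order_le_order_add _ _)
    rw [key]
    refine le_trans (le_min ?_ ?_) (min_order_le_order_add _ _)
    · refine le_trans ?_ (le_order_mul_of_le (a := 0) (by simp)
        (le_order_mul_of_le (le_order_X_pow m) (le_order_pow_of_le hu 2)))
      exact_mod_cast (by omega)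
    · exact le_trans (by exact_mod_cast (by omega)) (le_order_mul_of_le ih hX)

lemma coeff_X_add_pow_succ {u : PowerSeries R} {r m k : ℕ}
    (hu : ((r + 1 : ℕ) : ℕ∞) ≤ u.order) (hk : k < m + 2 * r + 1) :
    coeff k ((X + u) ^ (m + 1)) =
      coeff k (X ^ (m + 1)) + ((m + 1 : ℕ) : R) * coeff k (X ^ m * u) := by
  have h := coeff_of_lt_order k ((Nat.cast_lt.mpr hk).trans_le (le_order_X_add_pow_sub hu m))
  rwa [map_sub, map_sub, ← map_natCast (C (R := R)), coeff_C_mul, sub_sub, sub_eq_zero] at h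

lemma coeff_X_pow_mul_of_le_order {v : PowerSeries R} {r m k : ℕ}
    (hv : ((r + 1 : ℕ) : ℕ∞) ≤ v.order) (hk : k ≤ m + r + 1) :
    coeff k (X ^ m * v) = if k = m + r + 1 then coeff (r + 1) v else 0 := by
  rw [coeff_X_pow_mul']
  split_ifs with h₁ h₂ h₂
  · rw [show k - m = r + 1 by omega]
  · exact coeff_of_lt_order _ ((Nat.cast_lt.mpr (by omega)).trans_le hv)
  · omega
  · rfl

end PowerSeries

section Jcomp

variable {R : Type*} [Ring R]

lemma coeff_Jcomp (f g : PowerSeries R) (k : ℕ) :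
    coeff k (Jcomp f g) = ∑ m ∈ Finset.range k, coeff (m + 1) f * coeff k (g ^ (m + 1)) :=
  coeff_mk _ _

lemma Jcomp_add_left (f₁ f₂ g : PowerSeries R) :
    Jcomp (f₁ + f₂) g = Jcomp f₁ g + Jcomp f₂ g := by
  ext k
  simp [coeff_Jcomp, add_mul, Finset.sum_add_distrib]

lemma Jcomp_X_left {g : PowerSeries R} (hg : coeff 0 g = 0) : Jcomp X g = g := by
  ext k
  rcases k with _ | k
  · simp [coeff_Jcomp, hg]
  · simp [coeff_Jcomp, coeff_X]

lemma coeff_Jcomp_X_add_of_le_order {u v : PowerSeries R} {d r k : ℕ} (hd : 1 ≤ d)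
    (hr : 1 ≤ r) (hu : (d : ℕ∞) ≤ u.order) (hv : ((r + 1 : ℕ) : ℕ∞) ≤ v.order)
    (hk : k ≤ d + r) :
    coeff k (Jcomp u (X + v)) =
      coeff k u + if k = d + r then coeff d u * ((d : R) * coeff (r + 1) v) else 0 := by
  have hu' : ∀ m < d, coeff m u = 0 := fun m hm =>
    coeff_of_lt_order _ ((Nat.cast_lt.mpr hm).trans_le hu)
  have hterm : ∀ m ∈ Finset.range k, coeff (m + 1) u * coeff k ((X + v) ^ (m + 1)) =
      (if m + 1 = k then coeff (m + 1) u else 0) +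
        coeff (m + 1) u * (((m + 1 : ℕ) : R) * coeff k (X ^ m * v)) := by
    intro m _
    by_cases hm : m + 1 < d
    · simp [hu' _ hm]
    · rw [coeff_X_add_pow_succ hv (by omega), coeff_X_pow, mul_add, mul_ite, mul_one, mul_zero]
      simp only [eq_comm]
  rw [coeff_Jcomp, Finset.sum_congr rfl hterm, Finset.sum_add_distrib]
  congr 1
  · rcases k with _ | k
    · simp [hu' 0 hd]
    · simp
  · have hX : ∀ m, d ≤ m + 1 →
        coeff k (X ^ m * v) = if k = m + r + 1 then coeff (r + 1) v else 0 :=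
      fun m hm => coeff_X_pow_mul_of_le_order hv (by omega)
    rw [Finset.sum_eq_single (d - 1)]
    · rw [Nat.sub_add_cancel hd, hX _ (by omega), show d - 1 + r + 1 = d + r by omega]
      split_ifs <;> simp
    · intro m _ hm
      by_cases hmd : m + 1 < d
      · rw [hu' _ hmd, zero_mul]
      · rw [hX _ (by omega), if_neg (by omega), mul_zero, mul_zero]
    · intro hk'
      rw [hX _ (by omega), if_neg (by simp at hk'; omega), mul_zero, mul_zero]

lemma coeff_Jcomp_X_add {u v : PowerSeries R} {d r k : ℕ} (hd : 1 ≤ d) (hr : 1 ≤ r)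
    (hu : (d : ℕ∞) ≤ u.order) (hv : ((r + 1 : ℕ) : ℕ∞) ≤ v.order) (hk : k ≤ d + r) :
    coeff k (Jcomp (X + u) (X + v)) = coeff k (X + v) + coeff k u +
      if k = d + r then coeff d u * ((d : R) * coeff (r + 1) v) else 0 := by
  have hv₀ : coeff 0 (X + v) = 0 := by
    rw [map_add, coeff_X, if_neg zero_ne_one, zero_add,
      coeff_of_lt_order 0 ((Nat.cast_lt.mpr (Nat.succ_pos r)).trans_le hv)]
  rw [Jcomp_add_left, map_add, Jcomp_X_left hv₀, coeff_Jcomp_X_add_of_le_order hd hr hu hv hk,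
    add_assoc]

lemma two_le_order_sub_X {f : PowerSeries R} (hf : f ∈ Jset R) :
    ((2 : ℕ) : ℕ∞) ≤ (f - X).order :=
  nat_le_order _ _ fun j hj => by
    interval_cases j
    · simpa using hf.1
    · simp [coeff_X, hf.2]

lemma X_add_mem_Jset {v : PowerSeries R} (hv : ((2 : ℕ) : ℕ∞) ≤ v.order) :
    X + v ∈ Jset R := by
  have hv' : ∀ j < 2, coeff j v = 0 := fun j hj =>
    coeff_of_lt_order _ ((Nat.cast_lt.mpr hj).trans_le hv)
  refine ⟨?_, by simp [coeff_X, hv' 1 (by norm_num)]⟩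
  rw [map_add, coeff_X, if_neg zero_ne_one, zero_add, hv' 0 (by norm_num)]

lemma Jcomp_mem_Jset {f g : PowerSeries R} (hf : f ∈ Jset R) (hg : g ∈ Jset R) :
    Jcomp f g ∈ Jset R :=
  ⟨by simp [coeff_Jcomp], by simp [coeff_Jcomp, hf.2, hg.2]⟩

lemma JModEq_X_add_monomial_iff {f : PowerSeries R} {N : ℕ} {c : R} (hf : f ∈ Jset R)
    (hN : 2 ≤ N) :
    JModEq N f (X + monomial N c) ↔ (N : ℕ∞) ≤ (f - X).order ∧ coeff N f = c := by
  have hrhs : ∀ j, 2 ≤ j → coeff j (X + monomial N c) = if j = N then c else 0 :=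
      fun j hj => by
    simp [coeff_X, coeff_monomial, show j ≠ 1 by omega]
  constructor
  · intro hc
    have hc' : ∀ j, 2 ≤ j → j ≤ N → coeff j f = if j = N then c else 0 :=
        fun j hj₁ hj₂ => by
      have h := hc (j - 1) (by omega) (by omega)
      rwa [Nat.sub_add_cancel (by omega), hrhs j hj₁] at h
    refine ⟨nat_le_order _ _ fun j hj => ?_, by simpa using hc' N hN le_rfl⟩
    rcases j with _ | _ | j
    · simpa using hf.1
    · simp [coeff_X, hf.2]
    · simp [coeff_X, hc' (j + 2) (by omega) hj.le, hj.ne]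
  · rintro ⟨hord, rfl⟩ j hj₁ hj₂
    rw [hrhs (j + 1) (by omega)]
    split_ifs with hjN
    · rw [hjN]
    · have h :=
        coeff_of_lt_order (j + 1) ((Nat.cast_lt.mpr (by omega : j + 1 < N)).trans_le hord)
      simpa [coeff_X, show j ≠ 0 by omega] using h

lemma coeff_Jcomp_of_le_order_sub_X {F w : PowerSeries R} {k : ℕ} (hF : F ∈ Jset R)
    (hk : 2 ≤ k) (hw : (k : ℕ∞) ≤ (w - X).order) :
    coeff k (Jcomp F w) = coeff k w + coeff k F := by
  have h := coeff_Jcomp_X_add (u := F - X) (v := w - X) (d := 2) (r := k - 1) (k := k)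
    (by norm_num) (by omega) (two_le_order_sub_X hF) (by rwa [Nat.sub_add_cancel (by omega)])
    (by omega)
  rw [if_neg (by omega), add_zero] at h
  simpa [coeff_X, show k ≠ 1 by omega] using h

lemma le_order_sub_X_of_Jcomp_eq {F w : PowerSeries R} (hF : F ∈ Jset R) (hw : w ∈ Jset R)
    (N : ℕ) (hagree : ∀ j, 2 ≤ j → j < N → coeff j (Jcomp F w) = coeff j F) :
    (N : ℕ∞) ≤ (w - X).order := by
  induction N with
  | zero => simp
  | succ N ih =>
    have hN := ih fun j hj₁ hj₂ => hagree j hj₁ (by omega)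
    by_cases h2 : N + 1 ≤ 2
    · exact le_trans (by exact_mod_cast h2) (two_le_order_sub_X hw)
    have hcoeff : coeff N (w - X) = 0 := by
      have h := coeff_Jcomp_of_le_order_sub_X hF (by omega) hN
      rw [hagree N (by omega) (by omega)] at h
      simp [coeff_X, show N ≠ 1 by omega, add_eq_right.mp h.symm]
    refine nat_le_order _ _ fun j hj => ?_
    rcases (Nat.lt_succ_iff.mp hj).lt_or_eq with hj | rfl
    · exact coeff_of_lt_order _ ((Nat.cast_lt.mpr hj).trans_le hN)
    · exact hcoeff

end Jcomp

/-- Let `h ≡ t + α t^{n+1} (mod 𝒥_{n+1}(R))` and `a = t + β t^{i+1}`.  Then the loop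
commutator `[a,h] = (h ∘ a) \ (a ∘ h)` (formalized as: any `w ∈ 𝒥(R)` with
`(h ∘ a) ∘ w = a ∘ h`) satisfies
`[a,h] ≡ t + ((i+1)βα − (n+1)αβ) t^{n+i+1} (mod 𝒥_{n+i+1}(R))`. -/
theorem statement8 (R : Type*) [Ring R] (n i : ℕ) (hn : 1 ≤ n) (hi : 1 ≤ i)
    (α β : R) (h : PowerSeries R) (hh : h ∈ Jset R)
    (hcong : JModEq (n + 1) h (X + monomial (R := R) (n + 1) α)) :
    ∀ w ∈ Jset R,
      Jcomp (Jcomp h (X + monomial (R := R) (i + 1) β)) w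
          = Jcomp (X + monomial (R := R) (i + 1) β) h →
      JModEq (n + i + 1) w
        (X + monomial (R := R) (n + i + 1)
          (((i + 1 : ℕ) : R) * (β * α) - ((n + 1 : ℕ) : R) * (α * β))) := by
  intro w hw heq
  obtain ⟨hu, hα⟩ := (JModEq_X_add_monomial_iff hh (by omega)).1 hcong
  obtain ⟨u, rfl⟩ : ∃ u, h = X + u := ⟨h - X, (add_sub_cancel X h).symm⟩
  rw [add_sub_cancel_left] at hu
  replace hα : coeff (n + 1) u = α := by simpa [coeff_X, show n ≠ 0 by omega] using hα
  set v : PowerSeries R := monomial (i + 1) β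
  have hv : ((i + 1 : ℕ) : ℕ∞) ≤ v.order :=
    nat_le_order _ _ fun j hj => by simp [v, coeff_monomial, hj.ne]
  have hβ : coeff (i + 1) v = β := coeff_monomial_same _ _
  have hF : ∀ k ≤ n + i + 1, coeff k (Jcomp (X + u) (X + v)) = coeff k (X + v) + coeff k u +
      if k = n + i + 1 then α * (((n + 1 : ℕ) : R) * β) else 0 := fun k hk => by
    rw [coeff_Jcomp_X_add (by omega) hi hu hv (by omega), hα, hβ,
      show n + 1 + i = n + i + 1 by omega]
  have hG : ∀ k ≤ n + i + 1, coeff k (Jcomp (X + v) (X + u)) = coeff k (X + u) + coeff k v +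
      if k = n + i + 1 then β * (((i + 1 : ℕ) : R) * α) else 0 := fun k hk => by
    rw [coeff_Jcomp_X_add (by omega) hn hv (by simpa using hu) (by omega), hα, hβ,
      show i + 1 + n = n + i + 1 by omega]
  have hFJ : Jcomp (X + u) (X + v) ∈ Jset R :=
    Jcomp_mem_Jset hh (X_add_mem_Jset (le_trans (by exact_mod_cast (by omega)) hv))
  have hw_order : ((n + i + 1 : ℕ) : ℕ∞) ≤ (w - X).order :=
    le_order_sub_X_of_Jcomp_eq hFJ hw _ fun j hj₁ hj₂ => by
      rw [heq, hF j hj₂.le, hG j hj₂.le, if_neg hj₂.ne, if_neg hj₂.ne, map_add, map_add]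
      abel
  refine (JModEq_X_add_monomial_iff hw (by omega)).2 ⟨hw_order, ?_⟩
  have htop := coeff_Jcomp_of_le_order_sub_X hFJ (by omega) hw_order
  rw [heq, hF _ le_rfl, hG _ le_rfl, if_pos rfl, if_pos rfl] at htop
  rw [eq_sub_of_add_eq htop.symm, (Nat.cast_commute _ β).left_comm,
    (Nat.cast_commute _ α).left_comm, map_add, map_add]
  abel
end

section
/- Let R be a simple unital associative K-algebra (its only two-sided ideals are 0 and R) and let H be a subloop of 𝒥(R) with H ≠ {t} and [𝒥(R),H] ⊆ H. Then there exists n ≥ 1 such that 𝒥_{n+2}(R) ⊆ H ⊆ 𝒥_n(R). -/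
/-!
Let `n + 1` be the least degree `≥ 2` in which some element of `H` differs from `t`, so that
`H ⊆ 𝒥_n`. If `h ∈ H ∩ 𝒥_d` has leading coefficient `a` and `g = t + b t^{m+1}`, the commutator
`[g, h] ∈ H` lies in `𝒥_{m+d}` with leading coefficient `(m+1) b a - (d+1) a b`. The leading
coefficients at a given depth form an additive group, so combining such commutators and dividing
by integers puts every `x a y` among the leading coefficients at depths `n + 2` and `n + 3`; as
`R` is simple, these groups are all of `R`.

Pick `h₁ ∈ H ∩ 𝒥_{n+2}` and `h₂ ∈ H ∩ 𝒥_{n+3}` with leading coefficient `1`. Every element of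
`𝒥_{n+3}` is a product `[g₁, h₁] ∘ [g₂, h₂]`: putting `β` in degree `j + 2` of `g₁` and `-β` in
degree `j + 1` of `g₂` changes the product first in degree `n + 4 + j`, by `2 β` (by `-(n+1) β`
if `j = 0`), so the coefficients of `g₁, g₂` can be solved for degree by degree. Finally
`𝒥_{n+2} = (H ∩ 𝒥_{n+2}) ∘ 𝒥_{n+3}`.
-/

open PowerSeries

/-- `𝒥_n(R)`. -/
def JsetN (R : Type*) [Ring R] (n : ℕ) : Set (PowerSeries R) :=
  {f | f ∈ Jset R ∧ ∀ i, 1 ≤ i → i < n → coeff (R := R) (i + 1) f = 0}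

namespace JLoop

variable {R : Type*} [Ring R]

/-- `p = c t^N + O(t^{N+1})`; the coefficient `c` may be zero. -/
def HasInitialTerm (p : PowerSeries R) (N : ℕ) (c : R) : Prop :=
  ∀ k ≤ N, coeff k p = if k = N then c else 0

namespace HasInitialTerm

variable {p q : PowerSeries R} {N M : ℕ} {c d : R}

lemma coeff_of_lt (h : HasInitialTerm p N c) {k : ℕ} (hk : k < N) : coeff k p = 0 := by
  rw [h k hk.le, if_neg hk.ne]

lemma coeff_self (h : HasInitialTerm p N c) : coeff N p = c := by
  rw [h N le_rfl, if_pos rfl]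

lemma mono (h : HasInitialTerm p N c) (hM : M < N) : HasInitialTerm p M 0 := fun k hk => by
  rw [h.coeff_of_lt (hk.trans_lt hM), ite_self]

lemma add (hp : HasInitialTerm p N c) (hq : HasInitialTerm q N d) :
    HasInitialTerm (p + q) N (c + d) := fun k hk => by
  rw [map_add, hp k hk, hq k hk]; split_ifs <;> simp

lemma neg (hp : HasInitialTerm p N c) : HasInitialTerm (-p) N (-c) := fun k hk => by
  rw [map_neg, hp k hk]; split_ifs <;> simp

lemma sub (hp : HasInitialTerm p N c) (hq : HasInitialTerm q N d) :
    HasInitialTerm (p - q) N (c - d) := by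
  simpa only [sub_eq_add_neg] using hp.add hq.neg

lemma mul (hp : HasInitialTerm p N c) (hq : HasInitialTerm q M d) :
    HasInitialTerm (p * q) (N + M) (c * d) := by
  intro k hk
  rw [coeff_mul, show (if k = N + M then c * d else 0) =
      ∑ x ∈ Finset.HasAntidiagonal.antidiagonal k, if x = (N, M) then c * d else 0 by
    rw [Finset.sum_ite_eq']; simp [Finset.HasAntidiagonal.mem_antidiagonal, eq_comm]]
  refine Finset.sum_congr rfl fun x hx => ?_
  rw [Finset.HasAntidiagonal.mem_antidiagonal] at hx
  rcases lt_trichotomy x.1 N with h1 | h1 | h1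
  · rw [hp.coeff_of_lt h1, zero_mul, if_neg fun h => h1.ne (congrArg Prod.fst h)]
  · rw [h1, hp.coeff_self, hq x.2 (by omega)]
    by_cases h2 : x.2 = M
    · rw [if_pos h2, if_pos (Prod.ext h1 h2)]
    · rw [if_neg h2, mul_zero, if_neg fun h => h2 (congrArg Prod.snd h)]
  · rw [hq.coeff_of_lt (by omega), mul_zero, if_neg fun h => h1.ne' (congrArg Prod.fst h)]

end HasInitialTerm

lemma hasInitialTerm_of_coeff_eq_zero {p : PowerSeries R} {N : ℕ}
    (h : ∀ k < N, coeff k p = 0) : HasInitialTerm p N (coeff N p) := fun k hk => by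
  rcases hk.lt_or_eq with hk | rfl
  · rw [h k hk, if_neg hk.ne]
  · rw [if_pos rfl]

lemma hasInitialTerm_zero (N : ℕ) : HasInitialTerm (0 : PowerSeries R) N 0 := fun k _ => by
  simp

lemma hasInitialTerm_monomial (N : ℕ) (c : R) : HasInitialTerm (monomial N c) N c :=
  fun k _ => coeff_monomial k N c

lemma hasInitialTerm_X_pow (N : ℕ) : HasInitialTerm ((X : PowerSeries R) ^ N) N 1 :=
  fun k _ => coeff_X_pow k N

lemma mem_Jset_iff {f : PowerSeries R} : f ∈ Jset R ↔ HasInitialTerm f 1 1 := by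
  refine ⟨fun hf k hk => ?_, fun hf => ⟨hf.coeff_of_lt one_pos, hf.coeff_self⟩⟩
  interval_cases k
  · simpa using hf.1
  · simpa using hf.2

lemma mem_Jset_of_hasInitialTerm_sub_X {f : PowerSeries R} {N : ℕ} {c : R}
    (h : HasInitialTerm (f - X) N c) (hN : 2 ≤ N) : f ∈ Jset R := by
  have h0 := h.coeff_of_lt (k := 0) (by omega)
  have h1 := h.coeff_of_lt (k := 1) (by omega)
  simp only [map_sub, coeff_X] at h0 h1
  exact ⟨by simpa using h0, by simpa [sub_eq_zero] using h1⟩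

lemma hasInitialTerm_sub_X_iff {f : PowerSeries R} {n : ℕ} {c : R} (hn : 1 ≤ n) :
    HasInitialTerm (f - X) (n + 1) c ↔ f ∈ JsetN R n ∧ coeff (n + 1) f = c := by
  have hX : ∀ k, 2 ≤ k → coeff k (f - X) = coeff k f := fun k hk => by
    rw [map_sub, coeff_X, if_neg (by omega), sub_zero]
  constructor
  · intro h
    refine ⟨⟨mem_Jset_of_hasInitialTerm_sub_X h (by omega), fun i hi hin => ?_⟩, ?_⟩
    · rw [← hX (i + 1) (by omega), h.coeff_of_lt (by omega)]
    · rw [← hX _ (by omega), h.coeff_self]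
  · rintro ⟨⟨hJ, hN⟩, rfl⟩
    rw [← hX _ (by omega)]
    refine hasInitialTerm_of_coeff_eq_zero fun k hk => ?_
    rcases Nat.lt_or_ge k 2 with hk2 | hk2
    · interval_cases k
      · rw [map_sub, hJ.1]; simp
      · rw [map_sub, hJ.2]; simp
    · obtain ⟨i, rfl⟩ : ∃ i, k = i + 1 := ⟨k - 1, by omega⟩
      rw [hX _ hk2, hN i (by omega) (by omega)]

lemma hasInitialTerm_pow {g : PowerSeries R} (hg : g ∈ Jset R) (m : ℕ) :
    HasInitialTerm (g ^ m) m 1 := by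
  induction m with
  | zero => simpa using hasInitialTerm_X_pow (R := R) 0
  | succ m ih => simpa [pow_succ] using ih.mul (mem_Jset_iff.1 hg)

lemma HasInitialTerm.pow_sub_pow {g g' : PowerSeries R} {s : ℕ} {ε : R} (hg : g ∈ Jset R)
    (hg' : g' ∈ Jset R) (h : HasInitialTerm (g - g') s ε) (m : ℕ) :
    HasInitialTerm (g ^ (m + 1) - g' ^ (m + 1)) (s + m) ((m + 1) • ε) := by
  induction m with
  | zero => simpa using h
  | succ m ih =>
    have key : g ^ (m + 2) - g' ^ (m + 2) =
        (g ^ (m + 1) - g' ^ (m + 1)) * g + g' ^ (m + 1) * (g - g') := by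
      simp only [pow_succ _ (m + 1), sub_mul, mul_sub]; abel
    have h1 := ih.mul (mem_Jset_iff.1 hg)
    have h2 := (hasInitialTerm_pow hg' (m + 1)).mul h
    rw [show m + 1 + s = s + m + 1 by omega] at h2
    rw [key, show (m + 1 + 1) • ε = (m + 1) • ε * 1 + 1 * ε by
      rw [mul_one, one_mul, succ_nsmul]]
    exact h1.add h2

lemma X_mem_Jset : (X : PowerSeries R) ∈ Jset R :=
  mem_Jset_iff.2 (by simpa using hasInitialTerm_X_pow (R := R) 1)

lemma hasInitialTerm_sub_X_two {f : PowerSeries R} (hf : f ∈ Jset R) :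
    HasInitialTerm (f - X) 2 (coeff 2 (f - X)) := by
  refine hasInitialTerm_of_coeff_eq_zero fun k hk => ?_
  interval_cases k
  · rw [map_sub, hf.1]; simp
  · rw [map_sub, hf.2]; simp

lemma coeff_Jcomp (f g : PowerSeries R) (k : ℕ) :
    coeff k (Jcomp f g) = ∑ m ∈ Finset.range k, coeff (m + 1) f * coeff k (g ^ (m + 1)) :=
  coeff_mk _ _

lemma Jcomp_sub_left (u u' v : PowerSeries R) : Jcomp (u - u') v = Jcomp u v - Jcomp u' v := by
  ext k
  simp only [coeff_Jcomp, map_sub, sub_mul, Finset.sum_sub_distrib]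

lemma X_Jcomp {v : PowerSeries R} (hv : coeff 0 v = 0) : Jcomp X v = v := by
  ext k
  rcases k with _ | k
  · simp [coeff_Jcomp, ← hv]
  · simp [coeff_Jcomp, coeff_X, Finset.sum_ite_eq']

lemma Jcomp_X {u : PowerSeries R} (hu : coeff 0 u = 0) : Jcomp u X = u := by
  ext k
  rcases k with _ | k
  · simp [coeff_Jcomp, ← hu]
  · simp [coeff_Jcomp, coeff_X_pow, Finset.sum_ite_eq]

lemma Jcomp_mem_Jset {f g : PowerSeries R} (hf : f ∈ Jset R) (hg : g ∈ Jset R) :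
    Jcomp f g ∈ Jset R :=
  ⟨by simp [coeff_Jcomp], by simp [coeff_Jcomp, hf.2, hg.2]⟩

lemma hasInitialTerm_Jcomp_sub_Jcomp {p v v' : PowerSeries R} {t s : ℕ} {δ ε : R}
    (hp : HasInitialTerm p (t + 1) δ) (hv : v ∈ Jset R) (hv' : v' ∈ Jset R)
    (hvv' : HasInitialTerm (v - v') s ε) :
    HasInitialTerm (Jcomp p v - Jcomp p v') (t + s) (δ * ((t + 1) • ε)) := by
  intro k hk
  have hterm : ∀ m ∈ Finset.range k, coeff (m + 1) p * coeff k (v ^ (m + 1) - v' ^ (m + 1)) =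
      if m = t then (if k = t + s then δ * ((t + 1) • ε) else 0) else 0 := by
    intro m _
    have hpow := hvv'.pow_sub_pow hv hv' m
    rcases lt_trichotomy m t with hmt | rfl | hmt
    · rw [hp.coeff_of_lt (by omega), zero_mul, if_neg hmt.ne]
    · rw [hp.coeff_self, hpow k (by omega), if_pos rfl, add_comm s m]
      split_ifs <;> simp
    · rw [hpow.coeff_of_lt (by omega), mul_zero, if_neg hmt.ne']
  rw [map_sub, coeff_Jcomp, coeff_Jcomp, ← Finset.sum_sub_distrib]
  simp_rw [← mul_sub, ← map_sub]
  rw [Finset.sum_congr rfl hterm, Finset.sum_ite_eq']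
  by_cases hkt : k = t + s
  · rcases Nat.eq_zero_or_pos s with rfl | hs
    · have hε : ε = 0 := by rw [← hvv'.coeff_self, map_sub, hv.1, hv'.1, sub_zero]
      simp [hε]
    · rw [if_pos (Finset.mem_range.2 (by omega))]
  · simp [hkt]

lemma hasInitialTerm_Jcomp_sub_Jcomp_sub_left {u u' v : PowerSeries R} {t s : ℕ} {δ c : R}
    (huu' : HasInitialTerm (u - u') (t + 1) δ) (hv : v ∈ Jset R)
    (hvX : HasInitialTerm (v - X) s c) :
    HasInitialTerm (Jcomp u v - Jcomp u' v - (u - u')) (t + s) (δ * ((t + 1) • c)) := by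
  have h := hasInitialTerm_Jcomp_sub_Jcomp huu' hv X_mem_Jset hvX
  rwa [Jcomp_X (huu'.coeff_of_lt t.succ_pos), Jcomp_sub_left] at h

lemma hasInitialTerm_Jcomp_sub_Jcomp_sub_right {u v v' : PowerSeries R} {d s : ℕ} {c δ : R}
    (huX : HasInitialTerm (u - X) (d + 1) c) (hv : v ∈ Jset R) (hv' : v' ∈ Jset R)
    (hvv' : HasInitialTerm (v - v') s δ) :
    HasInitialTerm (Jcomp u v - Jcomp u v' - (v - v')) (d + s) (c * ((d + 1) • δ)) := by
  have h := hasInitialTerm_Jcomp_sub_Jcomp huX hv hv' hvv'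
  rw [Jcomp_sub_left, Jcomp_sub_left, X_Jcomp hv.1, X_Jcomp hv'.1] at h
  convert h using 1
  abel

lemma HasInitialTerm.Jcomp_sub_Jcomp {u u' v v' : PowerSeries R} {N : ℕ} {δ ε : R}
    (hu' : u' ∈ Jset R) (hv : v ∈ Jset R) (hv' : v' ∈ Jset R)
    (huu' : HasInitialTerm (u - u') (N + 1) δ) (hvv' : HasInitialTerm (v - v') (N + 1) ε) :
    HasInitialTerm (Jcomp u v - Jcomp u' v') (N + 1) (δ + ε) := by
  have h1 := (hasInitialTerm_Jcomp_sub_Jcomp_sub_left huu' hv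
    (hasInitialTerm_sub_X_two hv)).mono (by omega : N + 1 < N + 2)
  have h2 := (hasInitialTerm_Jcomp_sub_Jcomp_sub_right (hasInitialTerm_sub_X_two hu') hv hv'
    hvv').mono (by omega : N + 1 < 1 + (N + 1))
  convert ((h1.add h2).add huu').add hvv' using 1
  · abel
  · simp

lemma exists_forall_coeff_eq (Φ : (ℕ → R) → PowerSeries R) (k₀ : ℕ) (N : ℕ → ℤ)
    (hN : ∀ j (z : R), ∃ a, N j • a = z)
    (hΦ : ∀ b b' j, (∀ i < j, b i = b' i) →
      HasInitialTerm (Φ b' - Φ b) (k₀ + j) (N j • (b' j - b j)))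
    (f : PowerSeries R) : ∃ b, ∀ j, coeff (k₀ + j) (Φ b) = coeff (k₀ + j) f := by
  choose q hq using hN
  -- `c j` solves the first `j` equations
  let c : ℕ → ℕ → R := fun k => Nat.rec 0 (fun j cj => Function.update cj j
    (cj j + q j (coeff (k₀ + j) f - coeff (k₀ + j) (Φ cj)))) k
  have hc : ∀ i k, i < k → c k i = c (i + 1) i := by
    intro i k hik
    induction k with
    | zero => omega
    | succ k ih =>
      rcases (Nat.lt_succ_iff.1 hik).lt_or_eq with h | rfl
      · exact (Function.update_of_ne h.ne _ _).trans (ih h)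
      · rfl
  refine ⟨fun j => c (j + 1) j, fun j => ?_⟩
  have h1 := (hΦ (c (j + 1)) (fun i => c (i + 1) i) (j + 1)
    fun i hi => hc i (j + 1) hi).coeff_of_lt (k := k₀ + j) (by omega)
  have h2 := (hΦ (c j) (c (j + 1)) j fun i hi => (Function.update_of_ne hi.ne _ _).symm).coeff_self
  have h3 : c (j + 1) j - c j j = q j (coeff (k₀ + j) f - coeff (k₀ + j) (Φ (c j))) := by
    simp [c, Function.update_self]
  rw [h3, hq, map_sub, sub_eq_iff_eq_add, sub_add_cancel] at h2
  rwa [map_sub, h2, sub_eq_zero] at h1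

noncomputable def ofTail (b : ℕ → R) : PowerSeries R := X + X ^ 2 * mk b

lemma hasInitialTerm_X_sq_mul_mk {b : ℕ → R} {j : ℕ} (hb : ∀ i < j, b i = 0) :
    HasInitialTerm (X ^ 2 * mk b) (j + 2) (b j) := by
  have h := (hasInitialTerm_X_pow 2).mul (hasInitialTerm_of_coeff_eq_zero (p := mk b) (N := j)
    fun i hi => by rw [coeff_mk, hb i hi])
  rwa [coeff_mk, one_mul, add_comm] at h

lemma ofTail_mem_Jset (b : ℕ → R) : ofTail b ∈ Jset R := by
  have h : HasInitialTerm (ofTail b - X) (0 + 2) (b 0) := by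
    rw [ofTail, add_sub_cancel_left]
    exact hasInitialTerm_X_sq_mul_mk fun _ h => absurd h (Nat.not_lt_zero _)
  exact mem_Jset_of_hasInitialTerm_sub_X h le_rfl

lemma hasInitialTerm_ofTail_sub {b b' : ℕ → R} {j : ℕ} (hb : ∀ i < j, b i = b' i) :
    HasInitialTerm (ofTail b' - ofTail b) (j + 2) (b' j - b j) := by
  have h : ofTail b' - ofTail b = X ^ 2 * mk (b' - b) := by
    simp only [ofTail, add_sub_add_left_eq_sub, ← mul_sub]; congr 1
  rw [h]
  exact hasInitialTerm_X_sq_mul_mk fun i hi => by simp [hb i hi]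

lemma exists_Jcomp_eq {u v : PowerSeries R} (hu : u ∈ Jset R) (hv : v ∈ Jset R) :
    ∃ w, w ∈ Jset R ∧ Jcomp u w = v := by
  obtain ⟨b, hb⟩ := exists_forall_coeff_eq (fun b => Jcomp u (ofTail b)) 2 (fun _ => 1)
    (fun _ z => ⟨z, one_zsmul z⟩) (fun b b' j hbb' => by
      have h := hasInitialTerm_ofTail_sub hbb'
      have h' := (hasInitialTerm_Jcomp_sub_Jcomp_sub_right (hasInitialTerm_sub_X_two hu)
        (ofTail_mem_Jset b') (ofTail_mem_Jset b) h).mono (by omega : j + 2 < 1 + (j + 2))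
      rw [one_zsmul, add_comm 2 j]
      simpa using h'.add h) v
  have hw := Jcomp_mem_Jset hu (ofTail_mem_Jset b)
  refine ⟨ofTail b, ofTail_mem_Jset b, ext fun k => ?_⟩
  rcases Nat.lt_or_ge k 2 with hk | hk
  · interval_cases k
    · rw [hw.1, hv.1]
    · rw [hw.2, hv.2]
  · obtain ⟨j, rfl⟩ := Nat.exists_eq_add_of_le hk
    exact hb j

/-- Induction on the degree: below `t + s`, the series `u ∘ w'` and `u' ∘ w'` differ by
`u - u'`. -/
lemma hasInitialTerm_sub_of_Jcomp_eq {u u' v v' w w' : PowerSeries R} {t s N : ℕ} {δ c Δ : R}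
    (hu : u ∈ Jset R) (hw : w ∈ Jset R) (hw' : w' ∈ Jset R)
    (huw : Jcomp u w = v) (huw' : Jcomp u' w' = v')
    (huu' : HasInitialTerm (u - u') (t + 1) δ) (hw'X : HasInitialTerm (w' - X) s c)
    (hΔ : HasInitialTerm (v - v' - (u - u')) N Δ) (hN : N < t + s) :
    HasInitialTerm (w - w') N Δ := by
  subst huw huw'
  intro k
  induction k using Nat.strong_induction_on with
  | _ k ih =>
  intro hk
  have hww' : HasInitialTerm (w - w') k (coeff k (w - w')) :=
    hasInitialTerm_of_coeff_eq_zero fun i hi => by rw [ih i hi (by omega), if_neg (by omega)]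
  have h1 := (hasInitialTerm_Jcomp_sub_Jcomp_sub_right (hasInitialTerm_sub_X_two hu) hw hw'
    hww').coeff_of_lt (k := k) (by omega)
  have h2 := (hasInitialTerm_Jcomp_sub_Jcomp_sub_left huu' hw' hw'X).coeff_of_lt (k := k)
    (by omega)
  have h : w - w' = (Jcomp u w - Jcomp u' w' - (u - u')) -
      (Jcomp u w - Jcomp u w' - (w - w')) - (Jcomp u w' - Jcomp u' w' - (u - u')) := by abel
  rw [← hΔ k hk, h, map_sub, map_sub, h1, h2, sub_zero, sub_zero]

lemma hasInitialTerm_sub_X_of_Jcomp_eq {u v w : PowerSeries R} {N : ℕ} {Δ : R}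
    (hu : u ∈ Jset R) (hw : w ∈ Jset R) (huw : Jcomp u w = v)
    (hΔ : HasInitialTerm (v - u) N Δ) : HasInitialTerm (w - X) N Δ :=
  hasInitialTerm_sub_of_Jcomp_eq (t := N) (s := 1) hu hw X_mem_Jset huw (Jcomp_X hu.1)
    (by rw [sub_self]; exact hasInitialTerm_zero _) (by rw [sub_self]; exact hasInitialTerm_zero _)
    (by rwa [sub_self, sub_zero]) (by omega)

noncomputable def ldiv (u v : PowerSeries R) : PowerSeries R :=
  Classical.epsilon fun w => w ∈ Jset R ∧ Jcomp u w = v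

lemma ldiv_spec {u v : PowerSeries R} (hu : u ∈ Jset R) (hv : v ∈ Jset R) :
    ldiv u v ∈ Jset R ∧ Jcomp u (ldiv u v) = v :=
  Classical.epsilon_spec (exists_Jcomp_eq hu hv)

noncomputable def Jcomm (g h : PowerSeries R) : PowerSeries R := ldiv (Jcomp h g) (Jcomp g h)

lemma Jcomm_spec {g h : PowerSeries R} (hg : g ∈ Jset R) (hh : h ∈ Jset R) :
    Jcomm g h ∈ Jset R ∧ Jcomp (Jcomp h g) (Jcomm g h) = Jcomp g h :=
  ldiv_spec (Jcomp_mem_Jset hh hg) (Jcomp_mem_Jset hg hh)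

lemma hasInitialTerm_sub_of_comm {h g g' w w' : PowerSeries R} {d t : ℕ} {c δ c' : R}
    (hd : 1 ≤ d) (hh : HasInitialTerm (h - X) (d + 1) c) (hg : g ∈ Jset R) (hg' : g' ∈ Jset R)
    (hgg' : HasInitialTerm (g - g') (t + 1) δ) (hw : w ∈ Jset R) (hw' : w' ∈ Jset R)
    (hw'X : HasInitialTerm (w' - X) (d + 2) c')
    (hcomm : Jcomp (Jcomp h g) w = Jcomp g h) (hcomm' : Jcomp (Jcomp h g') w' = Jcomp g' h) :
    HasInitialTerm (w - w') (t + d + 1) ((t + 1) • (δ * c) - (d + 1) • (c * δ)) := by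
  have hhJ : h ∈ Jset R := mem_Jset_of_hasInitialTerm_sub_X hh (by omega)
  have hleft := hasInitialTerm_Jcomp_sub_Jcomp_sub_left hgg' hhJ hh
  have hright := hasInitialTerm_Jcomp_sub_Jcomp_sub_right hh hg hg' hgg'
  have hu : HasInitialTerm (Jcomp h g - Jcomp h g') (t + 1) δ := by
    simpa using (hright.mono (by omega : t + 1 < d + (t + 1))).add hgg'
  refine hasInitialTerm_sub_of_Jcomp_eq (Jcomp_mem_Jset hhJ hg) hw hw' hcomm hcomm' hu hw'X ?_
    (by omega)
  rw [show d + (t + 1) = t + d + 1 by omega] at hright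
  rw [show t + (d + 1) = t + d + 1 by omega] at hleft
  convert hleft.sub hright using 1
  · abel
  · rw [mul_smul_comm, mul_smul_comm]

lemma Jcomm_sub_X {h g : PowerSeries R} {d t : ℕ} {c δ : R} (hd : 1 ≤ d)
    (hh : HasInitialTerm (h - X) (d + 1) c) (hg : g ∈ Jset R)
    (hgX : HasInitialTerm (g - X) (t + 1) δ) :
    HasInitialTerm (Jcomm g h - X) (t + d + 1) ((t + 1) • (δ * c) - (d + 1) • (c * δ)) := by
  have hhJ : h ∈ Jset R := mem_Jset_of_hasInitialTerm_sub_X hh (by omega)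
  obtain ⟨hw, hcomm⟩ := Jcomm_spec hg hhJ
  refine hasInitialTerm_sub_of_comm hd hh hg X_mem_Jset hgX hw X_mem_Jset
    (by rw [sub_self]; exact hasInitialTerm_zero _) hcomm ?_
  rw [Jcomp_X hhJ.1, Jcomp_X hhJ.1, X_Jcomp hhJ.1]

lemma Jcomm_sub_Jcomm {h g g' : PowerSeries R} {d t : ℕ} {c δ : R} (hd : 1 ≤ d)
    (hh : HasInitialTerm (h - X) (d + 1) c) (hg : g ∈ Jset R) (hg' : g' ∈ Jset R)
    (hgg' : HasInitialTerm (g - g') (t + 1) δ) :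
    HasInitialTerm (Jcomm g h - Jcomm g' h) (t + d + 1)
      ((t + 1) • (δ * c) - (d + 1) • (c * δ)) := by
  have hhJ : h ∈ Jset R := mem_Jset_of_hasInitialTerm_sub_X hh (by omega)
  obtain ⟨hw, hcomm⟩ := Jcomm_spec hg hhJ
  obtain ⟨hw', hcomm'⟩ := Jcomm_spec hg' hhJ
  have hw'X := Jcomm_sub_X (t := 1) hd hh hg' (hasInitialTerm_sub_X_two hg')
  rw [show 1 + d + 1 = d + 2 by omega] at hw'X
  exact hasInitialTerm_sub_of_comm hd hh hg hg' hgg' hw hw' hw'X hcomm hcomm'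

lemma exists_zsmul_eq (K : Type*) [Field K] [CharZero K] [Algebra K R] {N : ℤ} (hN : N ≠ 0)
    (z : R) : ∃ a : R, N • a = z :=
  ⟨(N : K)⁻¹ • z, by rw [← Int.cast_smul_eq_zsmul K, smul_inv_smul₀ (Int.cast_ne_zero.2 hN)]⟩

lemma mul_mul_mem_of_nsmul_sub_nsmul_mem (K : Type*) [Field K] [CharZero K] [Algebra K R]
    (S : ℕ → AddSubgroup R)
    (hS : ∀ d, 1 ≤ d → ∀ a ∈ S d, ∀ m, 1 ≤ m → ∀ b,
      (m + 1) • (b * a) - (d + 1) • (a * b) ∈ S (m + d))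
    {d e : ℕ} (hd : 1 ≤ d) (he : 1 ≤ e) {a : R} (ha : a ∈ S d) (x y : R) :
    x * a * y ∈ S (d + e + 1) := by
  set E : R → R := fun b => (e + 1) • (b * a) - (d + 1) • (a * b) with hE
  have hC : ∀ b, (e + 1 + 1) • (b * a) - (d + 1) • (a * b) ∈ S (d + e + 1) := fun b => by
    simpa [show e + 1 + d = d + e + 1 by omega] using hS d hd a ha (e + 1) (by omega) b
  have hB : ∀ c b, (1 + 1) • (c * E b) - (e + d + 1) • (E b * c) ∈ S (d + e + 1) :=
    fun c b => by
      simpa [show 1 + (e + d) = d + e + 1 by omega] using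
        hS (e + d) (by omega) (E b) (hS d hd a ha e he b) 1 le_rfl c
  have hEmem : ∀ b, E b ∈ S (d + e + 1) := fun b => by
    obtain ⟨b', rfl⟩ := exists_zsmul_eq K (N := 1 - (e + d : ℤ)) (by omega) b
    convert hB 1 b' using 1
    simp only [hE, smul_mul_assoc, mul_smul_comm, one_mul, mul_one]
    module
  have hba : ∀ b, b * a ∈ S (d + e + 1) := fun b => by
    convert sub_mem (hC b) (hEmem b) using 1
    module
  have hab : ∀ b, a * b ∈ S (d + e + 1) := fun b => by
    obtain ⟨b', rfl⟩ := exists_zsmul_eq K (N := (d + 1 : ℤ)) (by omega) b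
    convert sub_mem (nsmul_mem (hba b') (e + 1 + 1)) (hC b') using 1
    simp only [mul_smul_comm]
    module
  have hU : ∀ c b, (2 * (d + 1)) • (c * a * b) + ((e + d + 1) * (e + 1)) • (b * a * c) ∈
      S (d + e + 1) := fun c b => by
    convert sub_mem (add_mem (nsmul_mem (hba (c * b)) (2 * (e + 1)))
      (nsmul_mem (hab (b * c)) ((e + d + 1) * (d + 1)))) (hB c b) using 1
    simp only [hE, mul_sub, sub_mul, mul_smul_comm, smul_mul_assoc, mul_assoc]
    module
  have hαβ : ((2 * (d + 1)) ^ 2 - ((e + d + 1) * (e + 1)) ^ 2 : ℤ) ≠ 0 := by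
    have : (2 * (d + 1) : ℤ) < (e + d + 1) * (e + 1) := by nlinarith
    nlinarith
  -- `α U(x', y) - β U(y, x') = (α² - β²) x' a y`, where `α`, `β` are the coefficients in `hU`
  obtain ⟨x', rfl⟩ := exists_zsmul_eq K hαβ x
  convert sub_mem (nsmul_mem (hU x' y) (2 * (d + 1)))
    (nsmul_mem (hU y x') ((e + d + 1) * (e + 1))) using 1
  simp only [smul_mul_assoc, smul_add]
  module

lemma eq_top_of_forall_mul_mul_mem (hsimple : ∀ I : TwoSidedIdeal R, I = ⊥ ∨ I = ⊤)
    (S : AddSubgroup R) {a : R} (ha : a ≠ 0) (h : ∀ x y, x * a * y ∈ S) : S = ⊤ := by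
  let I : TwoSidedIdeal R := TwoSidedIdeal.mk' {z | ∀ x y, x * z * y ∈ S}
    (fun x y => by simp [S.zero_mem])
    (fun hz hw x y => by simpa [mul_add, add_mul] using S.add_mem (hz x y) (hw x y))
    (fun hz x y => by simpa using S.neg_mem (hz x y))
    (fun {z w} hw x y => by simpa [mul_assoc] using hw (x * z) y)
    (fun {z w} hz x y => by simpa [mul_assoc] using hz x (w * y))
  have hmem : ∀ z, z ∈ I ↔ ∀ x y, x * z * y ∈ S :=
    fun z => TwoSidedIdeal.mem_mk' _ _ _ _ _ _ z
  rcases hsimple I with hI | hI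
  · exact absurd ((TwoSidedIdeal.mem_bot R).1 (hI ▸ (hmem a).2 h)) ha
  · refine eq_top_iff.2 fun r _ => ?_
    simpa using (hmem 1).1 (hI ▸ TwoSidedIdeal.mem_top R) r 1

structure IsNormalLeftSubloop (H : Set (PowerSeries R)) : Prop where
  subset_Jset : H ⊆ Jset R
  X_mem : X ∈ H
  Jcomp_mem : ∀ f ∈ H, ∀ g ∈ H, Jcomp f g ∈ H
  mem_of_Jcomp_mem : ∀ f ∈ H, ∀ g ∈ H, ∀ w ∈ Jset R, Jcomp f w = g → w ∈ H
  comm_mem : ∀ f ∈ Jset R, ∀ h ∈ H, ∀ w ∈ Jset R, Jcomp (Jcomp h f) w = Jcomp f h → w ∈ H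

namespace IsNormalLeftSubloop

variable {H : Set (PowerSeries R)} (hH : IsNormalLeftSubloop H)
include hH

lemma Jcomm_mem {g h : PowerSeries R} (hg : g ∈ Jset R) (hh : h ∈ H) : Jcomm g h ∈ H :=
  hH.comm_mem g hg h hh _ (Jcomm_spec hg (hH.subset_Jset hh)).1
    (Jcomm_spec hg (hH.subset_Jset hh)).2

def leadingCoeffs (d : ℕ) : AddSubgroup R where
  carrier := {a | ∃ w ∈ H, HasInitialTerm (w - X) (d + 1) a}
  zero_mem' := ⟨X, hH.X_mem, by rw [sub_self]; exact hasInitialTerm_zero _⟩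
  add_mem' := by
    rintro a b ⟨w₁, hw₁, h₁⟩ ⟨w₂, hw₂, h₂⟩
    refine ⟨Jcomp w₁ w₂, hH.Jcomp_mem _ hw₁ _ hw₂, ?_⟩
    simpa [Jcomp_X X_mem_Jset.1] using
      h₁.Jcomp_sub_Jcomp X_mem_Jset (hH.subset_Jset hw₂) X_mem_Jset h₂
  neg_mem' := by
    rintro a ⟨w, hw, h⟩
    obtain ⟨hq, hwq⟩ := ldiv_spec (hH.subset_Jset hw) X_mem_Jset
    refine ⟨ldiv w X, hH.mem_of_Jcomp_mem _ hw _ hH.X_mem _ hq hwq,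
      hasInitialTerm_sub_X_of_Jcomp_eq (hH.subset_Jset hw) hq hwq ?_⟩
    simpa using h.neg

lemma nsmul_sub_nsmul_mem_leadingCoeffs {d m : ℕ} (hd : 1 ≤ d) (hm : 1 ≤ m) {a : R}
    (ha : a ∈ hH.leadingCoeffs d) (b : R) :
    (m + 1) • (b * a) - (d + 1) • (a * b) ∈ hH.leadingCoeffs (m + d) := by
  obtain ⟨h, hh, hhX⟩ := ha
  have hgX : HasInitialTerm ((X + monomial (m + 1) b) - X) (m + 1) b := by
    rw [add_sub_cancel_left]; exact hasInitialTerm_monomial _ _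
  have hg := mem_Jset_of_hasInitialTerm_sub_X hgX (by omega)
  refine ⟨_, hH.Jcomm_mem hg hh, ?_⟩
  simpa [mul_smul_comm, smul_mul_assoc] using Jcomm_sub_X hd hhX hg hgX

end IsNormalLeftSubloop

section TwoCommutators

variable {h₁ h₂ : PowerSeries R} {n : ℕ}

noncomputable def twoComm (h₁ h₂ : PowerSeries R) (b : ℕ → R) : PowerSeries R :=
  Jcomp (Jcomm (ofTail b) h₁) (Jcomm (ofTail fun i => -b (i + 1)) h₂)

lemma hasInitialTerm_twoComm_sub_X (hh₁ : HasInitialTerm (h₁ - X) (n + 3) 1)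
    (hh₂ : HasInitialTerm (h₂ - X) (n + 4) 1) (b : ℕ → R) :
    HasInitialTerm (twoComm h₁ h₂ b - X) (n + 3) 0 := by
  have hc₁ := Jcomm_sub_X (t := 1) (d := n + 2) (by omega) hh₁ (ofTail_mem_Jset b)
    (hasInitialTerm_sub_X_two (ofTail_mem_Jset b))
  have hc₂ := Jcomm_sub_X (g := ofTail fun i => -b (i + 1)) (t := 1) (d := n + 3) (by omega) hh₂
    (ofTail_mem_Jset _) (hasInitialTerm_sub_X_two (ofTail_mem_Jset _))
  have h := (hc₁.mono (by omega : n + 2 + 1 < 1 + (n + 2) + 1)).Jcomp_sub_Jcomp X_mem_Jset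
    (Jcomm_spec (ofTail_mem_Jset _) (mem_Jset_of_hasInitialTerm_sub_X hh₂ (by omega))).1
    X_mem_Jset (hc₂.mono (by omega : n + 2 + 1 < 1 + (n + 3) + 1))
  simpa [twoComm, Jcomp_X X_mem_Jset.1] using h

lemma hasInitialTerm_twoComm_sub (hh₁ : HasInitialTerm (h₁ - X) (n + 3) 1)
    (hh₂ : HasInitialTerm (h₂ - X) (n + 4) 1) {b b' : ℕ → R} {j : ℕ} (hb : ∀ i < j, b i = b' i) :
    HasInitialTerm (twoComm h₁ h₂ b' - twoComm h₁ h₂ b) (n + 4 + j)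
      ((if j = 0 then -(n + 1 : ℤ) else 2) • (b' j - b j)) := by
  have hg₂ : HasInitialTerm (ofTail (fun i => -b' (i + 1)) - ofTail fun i => -b (i + 1)) (j + 1)
      (if j = 0 then 0 else -(b' j - b j)) := by
    rcases j with _ | j
    · simpa using (mem_Jset_iff.1 (ofTail_mem_Jset _)).sub (mem_Jset_iff.1 (ofTail_mem_Jset _))
    · rw [if_neg (Nat.succ_ne_zero j)]
      convert hasInitialTerm_ofTail_sub (j := j) (b := fun i => -b (i + 1))
        (b' := fun i => -b' (i + 1)) (fun i hi => by simp [hb (i + 1) (by omega)]) using 1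
      abel
  have hc₁ := Jcomm_sub_Jcomm (t := j + 1) (d := n + 2) (by omega) hh₁ (ofTail_mem_Jset b')
    (ofTail_mem_Jset b) (hasInitialTerm_ofTail_sub hb)
  have hc₂ := Jcomm_sub_Jcomm (t := j) (d := n + 3) (by omega) hh₂ (ofTail_mem_Jset _)
    (ofTail_mem_Jset _) hg₂
  rw [show j + 1 + (n + 2) + 1 = n + 3 + j + 1 by omega] at hc₁
  rw [show j + (n + 3) + 1 = n + 3 + j + 1 by omega] at hc₂
  have h := hc₁.Jcomp_sub_Jcomp
    (Jcomm_spec (ofTail_mem_Jset b) (mem_Jset_of_hasInitialTerm_sub_X hh₁ (by omega))).1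
    (Jcomm_spec (ofTail_mem_Jset _) (mem_Jset_of_hasInitialTerm_sub_X hh₂ (by omega))).1
    (Jcomm_spec (ofTail_mem_Jset _) (mem_Jset_of_hasInitialTerm_sub_X hh₂ (by omega))).1 hc₂
  rw [show n + 3 + j + 1 = n + 4 + j by omega] at h
  unfold twoComm
  convert h using 1
  split_ifs with hj
  · subst hj
    simp only [mul_one, one_mul]
    module
  · simp only [mul_one, one_mul]
    module

lemma IsNormalLeftSubloop.mem_of_hasInitialTerm_sub_X (K : Type*) [Field K] [CharZero K]
    [Algebra K R] {H : Set (PowerSeries R)}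
    (hH : IsNormalLeftSubloop H) (hh₁H : h₁ ∈ H) (hh₁ : HasInitialTerm (h₁ - X) (n + 3) 1)
    (hh₂H : h₂ ∈ H) (hh₂ : HasInitialTerm (h₂ - X) (n + 4) 1) {f : PowerSeries R} {c : R}
    (hf : HasInitialTerm (f - X) (n + 4) c) : f ∈ H := by
  obtain ⟨b, hb⟩ := exists_forall_coeff_eq (twoComm h₁ h₂) (n + 4)
    (fun j => if j = 0 then -(n + 1 : ℤ) else 2)
    (fun j z => exists_zsmul_eq K (by split_ifs <;> omega) z)
    (fun b b' j hbb' => hasInitialTerm_twoComm_sub hh₁ hh₂ hbb') f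
  have hW := hasInitialTerm_twoComm_sub_X hh₁ hh₂ b
  have hf' := hf.mono (by omega : n + 3 < n + 4)
  convert hH.Jcomp_mem _ (hH.Jcomm_mem (ofTail_mem_Jset _) hh₁H) _
    (hH.Jcomm_mem (ofTail_mem_Jset _) hh₂H)
  refine ext fun k => ?_
  rcases Nat.lt_or_ge k (n + 4) with hk | hk
  · have h := (hf' k (by omega)).trans (hW k (by omega)).symm
    rwa [map_sub, map_sub, sub_left_inj] at h
  · obtain ⟨j, rfl⟩ := Nat.exists_eq_add_of_le hk
    exact (hb j).symm

end TwoCommutators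

lemma IsNormalLeftSubloop.JsetN_subset (K : Type*) [Field K] [CharZero K] [Algebra K R]
    {H : Set (PowerSeries R)} (hH : IsNormalLeftSubloop H) {n : ℕ}
    (htop₂ : hH.leadingCoeffs (n + 2) = ⊤) (htop₃ : hH.leadingCoeffs (n + 3) = ⊤) :
    JsetN R (n + 2) ⊆ H := by
  obtain ⟨h₁, hh₁H, hh₁⟩ : (1 : R) ∈ hH.leadingCoeffs (n + 2) := htop₂ ▸ AddSubgroup.mem_top 1
  obtain ⟨h₂, hh₂H, hh₂⟩ : (1 : R) ∈ hH.leadingCoeffs (n + 3) := htop₃ ▸ AddSubgroup.mem_top 1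
  intro f hf
  obtain ⟨e, heH, he⟩ : coeff (n + 3) f ∈ hH.leadingCoeffs (n + 2) :=
    htop₂ ▸ AddSubgroup.mem_top _
  have hfX := (hasInitialTerm_sub_X_iff (by omega)).2 ⟨hf, rfl⟩
  have heJ := hH.subset_Jset heH
  obtain ⟨hw, hew⟩ := ldiv_spec heJ hf.1
  have hfe : HasInitialTerm (f - e) (n + 4) (coeff (n + 4) (f - e)) := by
    refine hasInitialTerm_of_coeff_eq_zero fun k hk => ?_
    simpa using (hfX.sub he) k (by omega)
  have hwH := hH.mem_of_hasInitialTerm_sub_X K hh₁H hh₁ hh₂H hh₂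
    (hasInitialTerm_sub_X_of_Jcomp_eq heJ hw hew hfe)
  simpa [hew] using hH.Jcomp_mem _ heH _ hwH

lemma exists_subset_JsetN_coeff_ne_zero {H : Set (PowerSeries R)} (hHJ : H ⊆ Jset R)
    (hX : X ∈ H) (hne : H ≠ {X}) :
    ∃ n, 1 ≤ n ∧ H ⊆ JsetN R n ∧ ∃ h ∈ H, coeff (n + 1) h ≠ 0 := by
  classical
  have hex : ∃ k, ∃ h ∈ H, coeff (k + 2) h ≠ 0 := by
    obtain ⟨h, hh, hhX⟩ : ∃ h ∈ H, h ≠ X := by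
      by_contra! hc
      exact hne (Set.eq_singleton_iff_unique_mem.2 ⟨hX, hc⟩)
    by_contra! hc
    refine hhX (ext fun k => ?_)
    rcases Nat.lt_or_ge k 2 with hk | hk
    · interval_cases k
      · simpa using (hHJ hh).1
      · simpa using (hHJ hh).2
    · obtain ⟨j, rfl⟩ := Nat.exists_eq_add_of_le' hk
      rw [hc j h hh, coeff_X, if_neg (by omega)]
  refine ⟨Nat.find hex + 1, by omega, fun h hh => ⟨hHJ hh, fun i hi hin => ?_⟩,
    Nat.find_spec hex⟩
  by_contra hc
  exact Nat.find_min hex (by omega : i - 1 < Nat.find hex)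
    ⟨h, hh, by rwa [show i - 1 + 2 = i + 1 by omega]⟩

end JLoop

open JLoop in
theorem statement12_general (K : Type*) [Field K] [CharZero K]
    (R : Type*) [Ring R] [Algebra K R]
    (hsimple : ∀ I : TwoSidedIdeal R, I = ⊥ ∨ I = ⊤)
    (H : Set (PowerSeries R))
    (hHJ : H ⊆ Jset R) (hHt : (X : PowerSeries R) ∈ H)
    (hHmul : ∀ f ∈ H, ∀ g ∈ H, Jcomp f g ∈ H)
    (hHld : ∀ f ∈ H, ∀ g ∈ H, ∀ w ∈ Jset R, Jcomp f w = g → w ∈ H)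
    (hnorm : ∀ f ∈ Jset R, ∀ h ∈ H, ∀ w ∈ Jset R,
      Jcomp (Jcomp h f) w = Jcomp f h → w ∈ H)
    (hnontriv : H ≠ {(X : PowerSeries R)}) :
    ∃ n : ℕ, 1 ≤ n ∧ JsetN R (n + 2) ⊆ H ∧ H ⊆ JsetN R n := by
  have hH : IsNormalLeftSubloop H := ⟨hHJ, hHt, hHmul, hHld, hnorm⟩
  obtain ⟨n, hn, hHn, h, hh, hh0⟩ := exists_subset_JsetN_coeff_ne_zero hHJ hHt hnontriv
  have ha : coeff (n + 1) h ∈ hH.leadingCoeffs n :=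
    ⟨h, hh, (hasInitialTerm_sub_X_iff hn).2 ⟨hHn hh, rfl⟩⟩
  have htop : ∀ e, 1 ≤ e → hH.leadingCoeffs (n + e + 1) = ⊤ := fun e he =>
    eq_top_of_forall_mul_mul_mem hsimple _ hh0 <|
      mul_mul_mem_of_nsmul_sub_nsmul_mem K hH.leadingCoeffs
        (fun _ hd _ ha _ hm b => hH.nsmul_sub_nsmul_mem_leadingCoeffs hd hm ha b) hn he ha
  exact ⟨n, hn, hH.JsetN_subset K (htop 1 le_rfl) (htop 2 (by norm_num)), hHn⟩

/-- If `R` is a simple unital associative algebra and `H` is a nontrivial subloop of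
`𝒥(R)` with `[𝒥(R),H] ⊆ H`, then `𝒥_{n+2}(R) ⊆ H ⊆ 𝒥_n(R)` for some `n ≥ 1`. -/
theorem statement12 (K : Type*) [Field K] [CharZero K]
    (R : Type*) [Ring R] [Algebra K R]
    (hsimple : ∀ I : TwoSidedIdeal R, I = ⊥ ∨ I = ⊤)
    (H : Set (PowerSeries R))
    (hHJ : H ⊆ Jset R) (hHt : (X : PowerSeries R) ∈ H)
    (hHmul : ∀ f ∈ H, ∀ g ∈ H, Jcomp f g ∈ H)
    (hHld : ∀ f ∈ H, ∀ g ∈ H, ∀ w ∈ Jset R, Jcomp f w = g → w ∈ H)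
    (hHrd : ∀ f ∈ H, ∀ g ∈ H, ∀ w ∈ Jset R, Jcomp w g = f → w ∈ H)
    (hnorm : ∀ f ∈ Jset R, ∀ h ∈ H, ∀ w ∈ Jset R,
      Jcomp (Jcomp h f) w = Jcomp f h → w ∈ H)
    (hnontriv : H ≠ {(X : PowerSeries R)}) :
    ∃ n : ℕ, 1 ≤ n ∧ JsetN R (n + 2) ⊆ H ∧ H ⊆ JsetN R n :=
  statement12_general K R hsimple H hHJ hHt hHmul hHld hnorm hnontriv
end
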